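/- Let F(z) = |z|²·L(z) + K(z) on the unit disk 𝔻, where L(z) = h₁(z)·conj(g₁(z)) is logharmonic with h₁, g₁ analytic on 𝔻 and h₁(0) = 0, and K(z) = h₂(z) + conj(g₂(z)) is harmonic with h₂, g₂ analytic on 𝔻. Suppose F(0) = 0, λ_F(0) = ||h₂'(0)| − |g₂'(0)|| = 1, Λ_K(z) = |h₂'(z)| + |g₂'(z)| ≤ 1 for all z ∈ 𝔻, and Λ_L(z) = |h₁'(z)·g₁(z)| + |h₁(z)·g₁'(z)| ≤ Λ₂ for all z ∈ 𝔻. Set r₁' = 1 if 3Λ₂ ≤ 1 and r₁' = 1/√(3Λ₂) if 3Λ₂ > 1. Then F is univalent (injective) on the disk 𝔻_{r₁'} = {|z| < r₁'}. -/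

import Mathlib

open Complex Metric ComplexConjugate

/-!
The hypotheses on `K` say that `‖h₂'‖ + ‖g₂'‖ ≤ 1` attains the value `1` at the origin, so by the
maximum principle `h₂'` and `g₂'` are constant: `K` is affine, `K z = K 0 + a z + conj (b z)` with
`|‖a‖ - ‖b‖| = 1`, and therefore `‖K z₁ - K z₂‖ ≥ ‖z₁ - z₂‖`. On the other hand `h₁(0) = 0` gives
`‖h₁ g₁‖ ≤ Λ₂ |z|`, whence the real derivative of `G(z) = |z|² L(z)` has norm at most `3 Λ₂ |z|²`,
and `G` is `3 Λ₂ m²`-Lipschitz on `|z| ≤ m`. The choice of `r₁'` is exactly what makes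
`3 Λ₂ m² < 1` for `m < r₁'`, so `F = G + K` cannot identify two points of `𝔻_{r₁'}`.
-/

theorem exists_norm_eq_one_mul_eq_norm (w : ℂ) : ∃ c : ℂ, ‖c‖ = 1 ∧ c * w = ‖w‖ := by
  refine ⟨exp (-(arg w : ℂ) * I), by simpa using norm_exp_ofReal_mul_I (-arg w), ?_⟩
  conv_lhs => arg 2; rw [← norm_mul_exp_arg_mul_I w]
  rw [mul_left_comm, ← exp_add, neg_mul, neg_add_cancel, exp_zero, mul_one]

theorem AnalyticOnNhd.eqOn_const_of_isMaxOn_norm_add_norm {f g : ℂ → ℂ} {U : Set ℂ} {z₀ : ℂ}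
    (hf : AnalyticOnNhd ℂ f U) (hg : AnalyticOnNhd ℂ g U) (hU : IsOpen U) (hUc : IsConnected U)
    (hz₀ : z₀ ∈ U) (hmax : IsMaxOn (fun z => ‖f z‖ + ‖g z‖) U z₀) :
    ∀ z ∈ U, f z = f z₀ ∧ g z = g z₀ := by
  obtain ⟨c₁, hc₁, hc₁f⟩ := exists_norm_eq_one_mul_eq_norm (f z₀)
  obtain ⟨c₂, hc₂, hc₂g⟩ := exists_norm_eq_one_mul_eq_norm (g z₀)
  have hnorm : ∀ z, ‖c₁ * f z‖ + ‖c₂ * g z‖ = ‖f z‖ + ‖g z‖ := fun z => by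
    rw [norm_mul, norm_mul, hc₁, hc₂, one_mul, one_mul]
  set φ : ℂ → ℂ := fun z => c₁ * f z + c₂ * g z
  have hφz₀ : φ z₀ = ((‖f z₀‖ + ‖g z₀‖ : ℝ) : ℂ) := by simp [φ, hc₁f, hc₂g]
  have hφmax : IsMaxOn (norm ∘ φ) U z₀ := fun z hz => by
    show ‖φ z‖ ≤ ‖φ z₀‖
    rw [hφz₀, norm_real, Real.norm_of_nonneg (by positivity)]
    exact (norm_add_le _ _).trans ((hnorm z).le.trans (hmax hz))
  have hφ := Complex.eqOn_of_isPreconnected_of_isMaxOn_norm hUc.isPreconnected hU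
    ((analyticOnNhd_const.mul hf).add (analyticOnNhd_const.mul hg)).differentiableOn hz₀ hφmax
  -- `Re (c₁ f + c₂ g) = ‖f z₀‖ + ‖g z₀‖ ≥ ‖c₁ f‖ + ‖c₂ g‖` forces both summands to be real.
  have hreal : ∀ z ∈ U, (c₁ * f z).im = 0 ∧ (c₂ * g z).im = 0 := fun z hz => by
    have hre : (c₁ * f z).re + (c₂ * g z).re = ‖f z₀‖ + ‖g z₀‖ := by
      simpa [φ, hφz₀] using congrArg re (hφ hz)
    have h₁ := re_le_norm (c₁ * f z)
    have h₂ := re_le_norm (c₂ * g z)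
    have := (hnorm z).trans_le (hmax hz)
    exact ⟨(nonneg_iff.1 (re_eq_norm.1 (by linarith))).2.symm,
      (nonneg_iff.1 (re_eq_norm.1 (by linarith))).2.symm⟩
  have hconst : ∀ {c : ℂ} {k : ℂ → ℂ}, ‖c‖ = 1 → AnalyticOnNhd ℂ k U →
      (∀ z ∈ U, (c * k z).im = 0) → ∀ z ∈ U, k z = k z₀ := by
    intro c k hc hk him z hz
    obtain ⟨w, hw⟩ := (analyticOnNhd_const.mul hk).eq_const_of_im_eq_const him hU hUc
    have hc0 : c ≠ 0 := norm_ne_zero_iff.1 (by rw [hc]; exact one_ne_zero)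
    exact mul_left_cancel₀ hc0 ((hw z hz).trans (hw z₀ hz₀).symm)
  intro z hz
  exact ⟨hconst hc₁ hf (fun z hz => (hreal z hz).1) z hz,
    hconst hc₂ hg (fun z hz => (hreal z hz).2) z hz⟩

theorem IsOpen.eq_add_mul_sub_of_deriv_eq_const {f : ℂ → ℂ} {U : Set ℂ} {a w : ℂ} (hU : IsOpen U)
    (hUc : IsPreconnected U) (hf : DifferentiableOn ℂ f U) (hd : ∀ z ∈ U, deriv f z = a)
    (hw : w ∈ U) : ∀ z ∈ U, f z = f w + a * (z - w) :=
  hU.eqOn_of_deriv_eq hUc hf (by fun_prop) (fun z hz => by simp [hd z hz]) hw (by simp)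

theorem eq_affine_of_abs_norm_deriv_sub_eq_one {h g : ℂ → ℂ}
    (hh : AnalyticOnNhd ℂ h (ball 0 1)) (hg : AnalyticOnNhd ℂ g (ball 0 1))
    (hlam : |‖deriv h 0‖ - ‖deriv g 0‖| = 1)
    (hK : ∀ z ∈ ball (0 : ℂ) 1, ‖deriv h z‖ + ‖deriv g z‖ ≤ 1) :
    ∀ z ∈ ball (0 : ℂ) 1, h z = h 0 + deriv h 0 * z ∧ g z = g 0 + deriv g 0 * z := by
  have h0 : (0 : ℂ) ∈ ball (0 : ℂ) 1 := mem_ball_self one_pos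
  have hmax : IsMaxOn (fun z => ‖deriv h z‖ + ‖deriv g z‖) (ball 0 1) 0 := fun z hz =>
    (hK z hz).trans (hlam ▸ (abs_sub _ _).trans_eq (by rw [abs_norm, abs_norm]))
  have hderiv := hh.deriv.eqOn_const_of_isMaxOn_norm_add_norm hg.deriv isOpen_ball
    ((convex_ball 0 1).isConnected ⟨0, h0⟩) h0 hmax
  intro z hz
  constructor
  · simpa using isOpen_ball.eq_add_mul_sub_of_deriv_eq_const (convex_ball 0 1).isPreconnected
      hh.differentiableOn (fun z hz => (hderiv z hz).1) h0 z hz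
  · simpa using isOpen_ball.eq_add_mul_sub_of_deriv_eq_const (convex_ball 0 1).isPreconnected
      hg.differentiableOn (fun z hz => (hderiv z hz).2) h0 z hz

theorem exists_hasFDerivAt_ofReal_norm_sq (z : ℂ) :
    ∃ N : ℂ →L[ℝ] ℂ, HasFDerivAt (fun w : ℂ => (‖w‖ : ℂ) ^ 2) N z ∧ ‖N‖ ≤ 2 * ‖z‖ := by
  simp only [← mul_conj']
  refine ⟨_, (hasFDerivAt_id z).mul conjCLE.hasFDerivAt, ?_⟩
  refine ContinuousLinearMap.opNorm_le_bound _ (by positivity) fun v => ?_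
  simp only [add_apply, smul_apply, ContinuousLinearEquiv.coe_coe, conjCLE_apply,
    ContinuousLinearMap.id_apply, id_eq, smul_eq_mul]
  calc ‖z * conj v + conj z * v‖ ≤ ‖z * conj v‖ + ‖conj z * v‖ := norm_add_le _ _
    _ = 2 * ‖z‖ * ‖v‖ := by simp only [norm_mul, norm_conj]; ring

theorem HasDerivAt.exists_hasFDerivAt_mul_conj {h g : ℂ → ℂ} {h' g' z : ℂ}
    (hh : HasDerivAt h h' z) (hg : HasDerivAt g g' z) :
    ∃ P : ℂ →L[ℝ] ℂ, HasFDerivAt (fun w => h w * conj (g w)) P z ∧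
      ‖P‖ ≤ ‖h' * g z‖ + ‖h z * g'‖ := by
  refine ⟨_, (hh.hasFDerivAt.restrictScalars ℝ).mul
    (conjCLE.hasFDerivAt.comp z (hg.hasFDerivAt.restrictScalars ℝ)), ?_⟩
  refine ContinuousLinearMap.opNorm_le_bound _ (by positivity) fun v => ?_
  simp only [add_apply, smul_apply, ContinuousLinearMap.coe_comp, Function.comp_apply,
    ContinuousLinearMap.coe_restrictScalars', ContinuousLinearMap.toSpanSingleton_apply,
    ContinuousLinearEquiv.coe_coe, conjCLE_apply, smul_eq_mul]
  calc _ ≤ ‖h z * conj (v * g')‖ + ‖conj (g z) * (v * h')‖ := norm_add_le _ _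
    _ = (‖h' * g z‖ + ‖h z * g'‖) * ‖v‖ := by simp only [norm_mul, norm_conj]; ring

theorem exists_hasFDerivAt_norm_sq_mul_mul_conj_le {h g : ℂ → ℂ} {z : ℂ} {Λ : ℝ}
    (hh : DifferentiableAt ℂ h z) (hg : DifferentiableAt ℂ g z)
    (hprod : ‖h z * g z‖ ≤ Λ * ‖z‖) (hder : ‖deriv h z * g z‖ + ‖h z * deriv g z‖ ≤ Λ) :
    ∃ D : ℂ →L[ℝ] ℂ, HasFDerivAt (fun w => (‖w‖ : ℂ) ^ 2 * (h w * conj (g w))) D z ∧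
      ‖D‖ ≤ 3 * Λ * ‖z‖ ^ 2 := by
  obtain ⟨N, hN, hNle⟩ := exists_hasFDerivAt_ofReal_norm_sq z
  obtain ⟨P, hP, hPle⟩ := hh.hasDerivAt.exists_hasFDerivAt_mul_conj hg.hasDerivAt
  refine ⟨_, hN.mul hP, ?_⟩
  calc ‖(‖z‖ : ℂ) ^ 2 • P + (h z * conj (g z)) • N‖
      ≤ ‖z‖ ^ 2 * ‖P‖ + ‖h z * g z‖ * ‖N‖ := by
        refine (norm_add_le _ _).trans_eq ?_
        simp only [norm_smul, norm_mul, norm_conj, norm_pow, norm_real, norm_norm]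
    _ ≤ ‖z‖ ^ 2 * Λ + Λ * ‖z‖ * (2 * ‖z‖) := by
        gcongr
        · exact hPle.trans hder
        · exact le_trans (by positivity) hprod
    _ = 3 * Λ * ‖z‖ ^ 2 := by ring

theorem norm_mul_le_of_norm_deriv_mul_add_le {h g : ℂ → ℂ} {s : Set ℂ} {Λ : ℝ}
    (hs : Convex ℝ s) (hs0 : (0 : ℂ) ∈ s)
    (hh : ∀ z ∈ s, DifferentiableAt ℂ h z) (hg : ∀ z ∈ s, DifferentiableAt ℂ g z) (h0 : h 0 = 0)
    (hL : ∀ z ∈ s, ‖deriv h z * g z‖ + ‖h z * deriv g z‖ ≤ Λ) :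
    ∀ z ∈ s, ‖h z * g z‖ ≤ Λ * ‖z‖ := fun z hz => by
  simpa [h0] using hs.norm_image_sub_le_of_norm_hasDerivWithin_le
    (fun x hx => ((hh x hx).hasDerivAt.mul (hg x hx).hasDerivAt).hasDerivWithinAt)
    (fun x hx => (norm_add_le _ _).trans (hL x hx)) hs0 hz

theorem norm_sq_mul_mul_conj_sub_le {h g : ℂ → ℂ} {Λ m : ℝ} {z₁ z₂ : ℂ}
    (hh : AnalyticOnNhd ℂ h (ball 0 1)) (hg : AnalyticOnNhd ℂ g (ball 0 1)) (h0 : h 0 = 0)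
    (hL : ∀ z ∈ ball (0 : ℂ) 1, ‖deriv h z * g z‖ + ‖h z * deriv g z‖ ≤ Λ)
    (hm : m < 1) (hz₁ : z₁ ∈ closedBall 0 m) (hz₂ : z₂ ∈ closedBall 0 m) :
    ‖(‖z₁‖ : ℂ) ^ 2 * (h z₁ * conj (g z₁)) - (‖z₂‖ : ℂ) ^ 2 * (h z₂ * conj (g z₂))‖ ≤
      3 * Λ * m ^ 2 * ‖z₁ - z₂‖ := by
  have hΛ : 0 ≤ Λ :=
    (add_nonneg (norm_nonneg _) (norm_nonneg _)).trans (hL 0 (mem_ball_self one_pos))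
  have hsub : closedBall (0 : ℂ) m ⊆ ball 0 1 := closedBall_subset_ball hm
  have hprod := norm_mul_le_of_norm_deriv_mul_add_le (convex_ball 0 1) (mem_ball_self one_pos)
    (fun z hz => (hh z hz).differentiableAt) (fun z hz => (hg z hz).differentiableAt) h0 hL
  choose D hD hDle using fun x (hx : x ∈ closedBall (0 : ℂ) m) =>
    exists_hasFDerivAt_norm_sq_mul_mul_conj_le (hh x (hsub hx)).differentiableAt
      (hg x (hsub hx)).differentiableAt (hprod x (hsub hx)) (hL x (hsub hx))
  refine (convex_closedBall 0 m).norm_image_sub_le_of_norm_fderiv_le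
    (fun x hx => (hD x hx).differentiableAt) (fun x hx => ?_) hz₂ hz₁
  rw [(hD x hx).fderiv]
  refine (hDle x hx).trans ?_
  have := mem_closedBall_zero_iff.1 hx
  gcongr

theorem lt_one_and_mul_sq_lt_one {Λ m : ℝ} (hm : 0 ≤ m)
    (hmr : m < if 3 * Λ ≤ 1 then 1 else 1 / Real.sqrt (3 * Λ)) :
    m < 1 ∧ 3 * Λ * m ^ 2 < 1 := by
  split_ifs at hmr with hΛ
  · exact ⟨hmr, by nlinarith⟩
  · have hs : 1 < Real.sqrt (3 * Λ) := by
      rw [Real.lt_sqrt zero_le_one, one_pow]; exact not_le.1 hΛ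
    have hms : m * Real.sqrt (3 * Λ) < 1 := (lt_div_iff₀ (by positivity)).1 hmr
    refine ⟨by nlinarith, ?_⟩
    calc 3 * Λ * m ^ 2 = (m * Real.sqrt (3 * Λ)) ^ 2 := by
          rw [mul_pow, Real.sq_sqrt (by linarith)]; ring
      _ < 1 := by nlinarith [mul_nonneg hm (Real.sqrt_nonneg (3 * Λ))]

theorem abs_norm_sub_norm_mul_le_norm_add_conj (a b w : ℂ) :
    |‖a‖ - ‖b‖| * ‖w‖ ≤ ‖a * w + conj (b * w)‖ := by
  calc |‖a‖ - ‖b‖| * ‖w‖ = |‖a * w‖ - ‖-conj (b * w)‖| := by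
        rw [norm_neg, norm_conj, norm_mul, norm_mul, ← sub_mul, abs_mul, abs_norm]
    _ ≤ ‖a * w - -conj (b * w)‖ := abs_norm_sub_norm_le _ _
    _ = ‖a * w + conj (b * w)‖ := by rw [sub_neg_eq_add]

theorem stmt_11_general (h₁ g₁ h₂ g₂ : ℂ → ℂ) (Λ₂ : ℝ)
    (hh₁ : AnalyticOnNhd ℂ h₁ (ball 0 1)) (hg₁ : AnalyticOnNhd ℂ g₁ (ball 0 1))
    (hh₂ : AnalyticOnNhd ℂ h₂ (ball 0 1)) (hg₂ : AnalyticOnNhd ℂ g₂ (ball 0 1))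
    (hh₁0 : h₁ 0 = 0)
    (F : ℂ → ℂ)
    (hF : ∀ z, F z = (‖z‖ : ℂ) ^ 2 * (h₁ z * (starRingEnd ℂ) (g₁ z)) +
      (h₂ z + (starRingEnd ℂ) (g₂ z)))
    (hlam : |‖deriv h₂ 0‖ - ‖deriv g₂ 0‖| = 1)
    (hK : ∀ z ∈ ball (0 : ℂ) 1,
      ‖deriv h₂ z‖ + ‖deriv g₂ z‖ ≤ 1)
    (hL : ∀ z ∈ ball (0 : ℂ) 1,
      ‖deriv h₁ z * g₁ z‖ + ‖h₁ z * deriv g₁ z‖ ≤ Λ₂)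
    (r₁' : ℝ)
    (hr₁' : r₁' = if 3 * Λ₂ ≤ 1 then 1 else 1 / Real.sqrt (3 * Λ₂)) :
    Set.InjOn F (ball 0 r₁') := by
  intro z₁ hz₁ z₂ hz₂ hF₁₂
  set m := max ‖z₁‖ ‖z₂‖
  obtain ⟨hm, hmΛ⟩ := lt_one_and_mul_sq_lt_one (Λ := Λ₂) (m := m) (by positivity)
    (hr₁' ▸ max_lt (mem_ball_zero_iff.1 hz₁) (mem_ball_zero_iff.1 hz₂))
  have hz₁m : z₁ ∈ closedBall 0 m := mem_closedBall_zero_iff.2 (le_max_left _ _)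
  have hz₂m : z₂ ∈ closedBall 0 m := mem_closedBall_zero_iff.2 (le_max_right _ _)
  have hK₁ := eq_affine_of_abs_norm_deriv_sub_eq_one hh₂ hg₂ hlam hK z₁
    (closedBall_subset_ball hm hz₁m)
  have hK₂ := eq_affine_of_abs_norm_deriv_sub_eq_one hh₂ hg₂ hlam hK z₂
    (closedBall_subset_ball hm hz₂m)
  set G : ℂ → ℂ := fun w => (‖w‖ : ℂ) ^ 2 * (h₁ w * conj (g₁ w)) with hG
  have hsplit : deriv h₂ 0 * (z₁ - z₂) + conj (deriv g₂ 0 * (z₁ - z₂)) = -(G z₁ - G z₂) := by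
    rw [hF, hF, hK₁.1, hK₁.2, hK₂.1, hK₂.2] at hF₁₂
    simp only [hG, map_add, map_mul, map_sub] at hF₁₂ ⊢
    linear_combination hF₁₂
  have hlower := abs_norm_sub_norm_mul_le_norm_add_conj (deriv h₂ 0) (deriv g₂ 0) (z₁ - z₂)
  rw [hlam, one_mul, hsplit, norm_neg] at hlower
  have hupper : ‖G z₁ - G z₂‖ ≤ 3 * Λ₂ * m ^ 2 * ‖z₁ - z₂‖ :=
    norm_sq_mul_mul_conj_sub_le hh₁ hg₁ hh₁0 hL hm hz₁m hz₂m
  have hzero : ‖z₁ - z₂‖ = 0 := by nlinarith [norm_nonneg (z₁ - z₂)]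
  exact sub_eq_zero.1 (norm_eq_zero.1 hzero)

/-- Landau-type theorem in the case `Λ_K ≤ 1`: univalence of
`F(z) = |z|² L(z) + K(z)` on the disk of radius `r₁' = 1` (if `3Λ₂ ≤ 1`) or
`r₁' = 1/√(3Λ₂)` (if `3Λ₂ > 1`). -/
theorem stmt_11 (h₁ g₁ h₂ g₂ : ℂ → ℂ) (Λ₂ : ℝ)
    (hh₁ : AnalyticOnNhd ℂ h₁ (ball 0 1)) (hg₁ : AnalyticOnNhd ℂ g₁ (ball 0 1))
    (hh₂ : AnalyticOnNhd ℂ h₂ (ball 0 1)) (hg₂ : AnalyticOnNhd ℂ g₂ (ball 0 1))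
    (hh₁0 : h₁ 0 = 0)
    (F : ℂ → ℂ)
    (hF : ∀ z, F z = (‖z‖ : ℂ) ^ 2 * (h₁ z * (starRingEnd ℂ) (g₁ z)) +
      (h₂ z + (starRingEnd ℂ) (g₂ z)))
    (hF0 : F 0 = 0)
    (hlam : |‖deriv h₂ 0‖ - ‖deriv g₂ 0‖| = 1)
    (hK : ∀ z ∈ ball (0 : ℂ) 1,
      ‖deriv h₂ z‖ + ‖deriv g₂ z‖ ≤ 1)
    (hL : ∀ z ∈ ball (0 : ℂ) 1,
      ‖deriv h₁ z * g₁ z‖ + ‖h₁ z * deriv g₁ z‖ ≤ Λ₂)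
    (r₁' : ℝ)
    (hr₁' : r₁' = if 3 * Λ₂ ≤ 1 then 1 else 1 / Real.sqrt (3 * Λ₂)) :
    Set.InjOn F (ball 0 r₁') :=
  stmt_11_general h₁ g₁ h₂ g₂ Λ₂ hh₁ hg₁ hh₂ hg₂ hh₁0 F hF hlam hK hL r₁' hr₁'
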